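/- arXiv:1910.01437 — 4 statements merged into one kernel-verified Lean document; each statement's English description precedes it below -/
import Mathlib

section
/- Let φ : [a,b] → ℝ be differentiable with φ'(x) ≥ γ > 0 for all x ∈ [a,b], and suppose φ' is monotone on [a,b]. Then |∫_a^b e^{2πi φ(x)} dx| ≤ 1/γ. -/
/-!
Write `e^{2πiφ} = (1/φ') • f` with `f = φ' e^{2πiφ}`. The factor `f` has the primitive
`e^{2πiφ}/(2πi)`, so every integral of `f` over a subinterval has norm at most `1/π`, while
`1/φ'` is monotone with values in `[0, 1/γ]`. For a monotone `h ≥ 0`, integrating by parts against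
the Stieltjes measure `dh` (Abel summation, justified by Fubini on a triangle) bounds
`‖∫_a^b h f‖` by `h(b) · sup_x ‖∫_x^b f‖`, or by `h(a) · sup_x ‖∫_a^x f‖` when `h` is antitone;
this gives `1/(πγ) ≤ 1/γ`.
-/

open MeasureTheory Real Complex Set intervalIntegral

section
variable {E : Type*} [NormedAddCommGroup E] [NormedSpace ℝ E] [CompleteSpace E]
  {f : ℝ → E} {a b D : ℝ}

theorem StieltjesFunction.setIntegral_Ioc_sub_smul_eq (S : StieltjesFunction ℝ)
    (hf : IntegrableOn f (Ioc a b)) :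
    ∫ t in Ioc a b, (S t - S a) • f t = ∫ x in Ioc a b, (∫ t in x..b, f t) ∂S.measure := by
  have : IsFiniteMeasure (S.measure.restrict (Ioc a b)) := ⟨by simp [S.measure_Ioc]⟩
  set T : Set (ℝ × ℝ) := {p | a < p.2 ∧ p.2 ≤ p.1}
  have hT : MeasurableSet T :=
    (measurableSet_lt measurable_const measurable_snd).inter
      (measurableSet_le measurable_snd measurable_fst)
  have hg : Integrable (T.indicator fun p => f p.1)
      ((volume.restrict (Ioc a b)).prod (S.measure.restrict (Ioc a b))) :=
    (hf.comp_fst _).indicator hT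
  calc ∫ t in Ioc a b, (S t - S a) • f t
      = ∫ t in Ioc a b, ∫ x in Ioc a b, T.indicator (fun p => f p.1) (t, x) ∂S.measure := by
        refine setIntegral_congr_fun measurableSet_Ioc fun t ht => ?_
        have : (fun x => T.indicator (fun p => f p.1) (t, x)) =
            (Ioc a t).indicator fun _ => f t := by
          ext x; simp [T, indicator, mem_Ioc]
        rw [this, integral_indicator_const _ measurableSet_Ioc,
          measureReal_restrict_apply measurableSet_Ioc, inter_eq_left.2 (Ioc_subset_Ioc_right ht.2),
          measureReal_def, S.measure_Ioc,
          ENNReal.toReal_ofReal (sub_nonneg.2 (S.mono ht.1.le))]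
    _ = ∫ x in Ioc a b, ∫ t in Ioc a b, T.indicator (fun p => f p.1) (t, x) ∂volume ∂S.measure :=
        integral_integral_swap hg
    _ = ∫ x in Ioc a b, (∫ t in x..b, f t) ∂S.measure := by
        refine setIntegral_congr_fun measurableSet_Ioc fun x hx => ?_
        have : (fun t => T.indicator (fun p => f p.1) (t, x)) = (Ici x).indicator f := by
          ext t; by_cases hxt : x ≤ t <;> simp [T, indicator, hx.1, hxt]
        have hIcc : Ioc a b ∩ Ici x = Icc x b := by
          ext t
          simp only [mem_inter_iff, mem_Ioc, mem_Ici, mem_Icc]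
          exact ⟨fun h => ⟨h.2, h.1.2⟩, fun h => ⟨⟨hx.1.trans_le h.1, h.2⟩, h.1⟩⟩
        rw [this, setIntegral_indicator measurableSet_Ici, hIcc, integral_Icc_eq_integral_Ioc,
          integral_of_le hx.2]

theorem StieltjesFunction.norm_setIntegral_Ioc_smul_le (S : StieltjesFunction ℝ) (hab : a ≤ b)
    (hf : IntegrableOn f (Ioc a b)) (hSa : 0 ≤ S a)
    (hD : ∀ x ∈ Icc a b, ‖∫ t in x..b, f t‖ ≤ D) :
    ‖∫ t in Ioc a b, S t • f t‖ ≤ S b * D := by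
  have hS : ∀ t ∈ Ioc a b, ‖S t - S a‖ ≤ S b - S a := fun t ht => by
    rw [Real.norm_of_nonneg (sub_nonneg.2 (S.mono ht.1.le))]
    linarith [S.mono ht.2]
  have hSf : IntegrableOn (fun t => (S t - S a) • f t) (Ioc a b) :=
    hf.bdd_smul (S b - S a) (S.mono.measurable.sub_const _).aestronglyMeasurable
      (ae_restrict_of_forall_mem measurableSet_Ioc hS)
  have hsplit : ∫ t in Ioc a b, S t • f t
      = S a • (∫ t in a..b, f t) + ∫ t in Ioc a b, (S t - S a) • f t := by
    rw [integral_of_le hab, ← MeasureTheory.integral_smul,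
      ← integral_add (f := fun t => S a • f t) (hf.smul (S a)) hSf]
    simp_rw [← add_smul, add_sub_cancel]
  have hmass : S.measure.real (Ioc a b) = S b - S a := by
    rw [measureReal_def, S.measure_Ioc, ENNReal.toReal_ofReal (sub_nonneg.2 (S.mono hab))]
  calc ‖∫ t in Ioc a b, S t • f t‖
      = ‖S a • (∫ t in a..b, f t) + ∫ x in Ioc a b, (∫ t in x..b, f t) ∂S.measure‖ := by
        rw [hsplit, S.setIntegral_Ioc_sub_smul_eq hf]
    _ ≤ S a * D + D * (S b - S a) := by
        refine norm_add_le_of_le ?_ ?_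
        · rw [norm_smul, Real.norm_of_nonneg hSa]
          exact mul_le_mul_of_nonneg_left (hD a ⟨le_rfl, hab⟩) hSa
        · rw [← hmass]
          exact norm_setIntegral_le_of_norm_le_const (by simp [S.measure_Ioc])
            fun x hx => hD x (Ioc_subset_Icc_self hx)
    _ = S b * D := by ring

theorem Monotone.stieltjesFunction_ae_eq {g : ℝ → ℝ} (hg : Monotone g) (μ : Measure ℝ)
    [NullSingletonClass μ] : hg.stieltjesFunction =ᵐ[μ] g := by
  filter_upwards [hg.countable_not_continuousAt.ae_notMem μ] with x hx
  rw [hg.stieltjesFunction_eq]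
  exact (not_not.1 hx).continuousWithinAt.rightLim_eq

theorem MonotoneOn.norm_intervalIntegral_smul_le {h : ℝ → ℝ} (hh : MonotoneOn h (Icc a b))
    (hab : a ≤ b) (ha : 0 ≤ h a) (hf : IntervalIntegrable f volume a b)
    (hD : ∀ x ∈ Icc a b, ‖∫ t in x..b, f t‖ ≤ D) :
    ‖∫ x in a..b, h x • f x‖ ≤ h b * D := by
  set g : ℝ → ℝ := fun x => h (projIcc a b hab x)
  have hg : Monotone g := fun x y hxy =>
    hh (projIcc a b hab x).2 (projIcc a b hab y).2 (monotone_projIcc hab hxy)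
  have hgh : EqOn g h (Icc a b) := fun x hx => by simp [g, projIcc_of_mem hab hx]
  set S := hg.stieltjesFunction
  have hSa : 0 ≤ S a := by
    rw [hg.stieltjesFunction_eq]
    exact (ha.trans_eq (hgh ⟨le_rfl, hab⟩).symm).trans (hg.le_rightLim le_rfl)
  have hSb : S b ≤ h b := by
    rw [hg.stieltjesFunction_eq]
    exact (hg.rightLim_le (lt_add_one b)).trans_eq (by simp [g, projIcc_of_right_le hab])
  have hD0 : 0 ≤ D := (norm_nonneg _).trans (hD b ⟨hab, le_rfl⟩)
  calc ‖∫ x in a..b, h x • f x‖ = ‖∫ t in Ioc a b, S t • f t‖ := by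
        rw [integral_of_le hab]
        congr 1
        refine setIntegral_congr_ae measurableSet_Ioc ?_
        filter_upwards [hg.stieltjesFunction_ae_eq volume] with x hx hmem
        rw [hx, hgh (Ioc_subset_Icc_self hmem)]
    _ ≤ S b * D := S.norm_setIntegral_Ioc_smul_le hab hf.1 hSa hD
    _ ≤ h b * D := mul_le_mul_of_nonneg_right hSb hD0

theorem AntitoneOn.norm_intervalIntegral_smul_le {h : ℝ → ℝ} (hh : AntitoneOn h (Icc a b))
    (hab : a ≤ b) (hb : 0 ≤ h b) (hf : IntervalIntegrable f volume a b)
    (hD : ∀ x ∈ Icc a b, ‖∫ t in a..x, f t‖ ≤ D) :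
    ‖∫ x in a..b, h x • f x‖ ≤ h a * D := by
  have hmem : ∀ {x}, x ∈ Icc (-b) (-a) → -x ∈ Icc a b := fun hx =>
    ⟨le_neg_of_le_neg hx.2, neg_le.1 hx.1⟩
  have hh' : MonotoneOn (fun x => h (-x)) (Icc (-b) (-a)) := fun x hx y hy hxy =>
    hh (hmem hy) (hmem hx) (neg_le_neg hxy)
  have key := hh'.norm_intervalIntegral_smul_le (f := fun x => f (-x)) (neg_le_neg hab)
    (by simpa using hb) ((IntervalIntegrable.iff_comp_neg (f := f)).1 hf).symm fun x hx => by
      simpa [integral_comp_neg] using hD (-x) (hmem hx)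
  have hneg := integral_comp_neg (a := a) (b := b) fun x => h (-x) • f (-x)
  simp only [neg_neg] at hneg
  rw [hneg]
  simpa only [neg_neg] using key

end

section
variable {φ φ' : ℝ → ℝ} {a b : ℝ}

theorem intervalIntegrable_smul_cexp_two_pi_I (hφ : ∀ x ∈ uIcc a b, HasDerivAt φ (φ' x) x)
    (hφ' : IntervalIntegrable φ' volume a b) :
    IntervalIntegrable (fun x => φ' x • cexp (2 * π * I * φ x)) volume a b :=
  hφ'.smul_continuousOn fun x hx => by
    have := (hφ x hx).continuousAt
    exact ContinuousAt.continuousWithinAt (by fun_prop)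

theorem norm_integral_deriv_smul_cexp_two_pi_I_le (hφ : ∀ x ∈ uIcc a b, HasDerivAt φ (φ' x) x)
    (hφ' : IntervalIntegrable φ' volume a b) :
    ‖∫ x in a..b, φ' x • cexp (2 * π * I * φ x)‖ ≤ π⁻¹ := by
  have h2πI : (2 * π * I : ℂ) ≠ 0 := by simp [pi_ne_zero]
  have hderiv : ∀ x ∈ uIcc a b, HasDerivAt (fun x => (2 * π * I)⁻¹ * cexp (2 * π * I * φ x))
      (φ' x • cexp (2 * π * I * φ x)) x := fun x hx => by
    refine (((hφ x hx).ofReal_comp.const_mul (2 * π * I)).cexp.const_mul _).congr_deriv ?_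
    rw [real_smul]
    field_simp
  have hnorm : ∀ x, ‖cexp (2 * π * I * φ x)‖ = 1 := fun x => by
    rw [← norm_exp_ofReal_mul_I (2 * π * φ x)]
    push_cast
    ring_nf
  rw [integral_eq_sub_of_hasDerivAt hderiv (intervalIntegrable_smul_cexp_two_pi_I hφ hφ'),
    ← mul_sub]
  calc _ ≤ ‖(2 * π * I : ℂ)⁻¹‖ * (‖cexp (2 * π * I * φ b)‖ + ‖cexp (2 * π * I * φ a)‖) :=
        (norm_mul_le _ _).trans (mul_le_mul_of_nonneg_left (norm_sub_le _ _) (norm_nonneg _))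
    _ = π⁻¹ := by
        rw [hnorm, hnorm, norm_inv]
        simp only [Complex.norm_mul, Complex.norm_ofNat, norm_real, norm_eq_abs, abs_of_pos pi_pos,
          norm_I, mul_one]
        ring
end

/-- Van der Corput lemma: if `φ` is differentiable on `[a,b]` with derivative `φ'`
bounded below by `γ > 0` and monotone on `[a,b]`, then
`|∫_a^b e^{2πiφ(x)} dx| ≤ 1/γ`. -/
theorem van_der_corput_lemma (a b γ : ℝ) (hab : a ≤ b) (φ φ' : ℝ → ℝ)
    (hderiv : ∀ x ∈ Set.Icc a b, HasDerivAt φ (φ' x) x)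
    (hγ : 0 < γ)
    (hlb : ∀ x ∈ Set.Icc a b, γ ≤ φ' x)
    (hmono : MonotoneOn φ' (Set.Icc a b) ∨ AntitoneOn φ' (Set.Icc a b)) :
    ‖∫ x in a..b, Complex.exp (2 * Real.pi * Complex.I * (φ x : ℂ))‖ ≤ 1 / γ := by
  have hpos : ∀ x ∈ Icc a b, 0 < φ' x := fun x hx => hγ.trans_le (hlb x hx)
  have hφ' : IntervalIntegrable φ' volume a b := by
    rw [← uIcc_of_le hab] at hmono
    exact hmono.elim MonotoneOn.intervalIntegrable AntitoneOn.intervalIntegrable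
  have hφ : ∀ x ∈ uIcc a b, HasDerivAt φ (φ' x) x := by rwa [uIcc_of_le hab]
  have hD : ∀ x ∈ Icc a b, ∀ y ∈ Icc a b,
      ‖∫ t in x..y, φ' t • cexp (2 * π * I * φ t)‖ ≤ π⁻¹ := fun x hx y hy =>
    norm_integral_deriv_smul_cexp_two_pi_I_le (fun t ht => hderiv t (uIcc_subset_Icc hx hy ht))
      (hφ'.mono_set (uIcc_subset_uIcc (uIcc_of_le hab ▸ hx) (uIcc_of_le hab ▸ hy)))
  have hbound : ∀ x ∈ Icc a b, (φ' x)⁻¹ * π⁻¹ ≤ 1 / γ := fun x hx => by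
    rw [one_div]
    exact (mul_le_of_le_one_right (inv_nonneg.2 (hpos x hx).le)
      (inv_le_one_of_one_le₀ (by linarith [pi_gt_three]))).trans (inv_anti₀ hγ (hlb x hx))
  have hint := intervalIntegrable_smul_cexp_two_pi_I hφ hφ'
  have ha : a ∈ Icc a b := ⟨le_rfl, hab⟩
  have hb : b ∈ Icc a b := ⟨hab, le_rfl⟩
  rw [integral_congr (g := fun x => (φ' x)⁻¹ • φ' x • cexp (2 * π * I * φ x)) fun x hx =>
    (inv_smul_smul₀ (hpos x (uIcc_of_le hab ▸ hx)).ne' _).symm]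
  rcases hmono with hmono | hanti
  · have hinv : AntitoneOn (fun x => (φ' x)⁻¹) (Icc a b) := fun x hx y hy hxy =>
      inv_anti₀ (hpos x hx) (hmono hx hy hxy)
    exact (hinv.norm_intervalIntegral_smul_le hab (inv_nonneg.2 (hpos b hb).le) hint
      fun x hx => hD a ha x hx).trans (hbound a ha)
  · have hinv : MonotoneOn (fun x => (φ' x)⁻¹) (Icc a b) := fun x hx y hy hxy =>
      inv_anti₀ (hpos y hy) (hanti hx hy hxy)
    exact (hinv.norm_intervalIntegral_smul_le hab (inv_nonneg.2 (hpos a ha).le) hint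
      fun x hx => hD x hx b hb).trans (hbound b hb)
end

section
/- Let f : [a,b] → ℝ be a strictly increasing differentiable convex function with f'(a) > 0, and let s > 0. Then for all sufficiently large N, the Lebesgue measure of the set {α ∈ [a,b] : f(α) ∈ ℤ + [−s/N, s/N]} is at most 4s(b−a)/N + C·(4s)/(N f'(a)) for some absolute constant C. -/
open MeasureTheory

/-!
For `δ = s / N`, the points of `[a, b]` where `f` is within `δ` of a given integer `k` form a band.
Since `f` is convex, it rises with slope at least `f'(a)` on `[a, b]`, so each band has length at
most `2δ / f'(a)`. Between the bands at `k - 1` and `k`, `f` rises by at least `1 - 2δ ≥ 1/2`;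
by convexity it rises at least as steeply across the band at `k`, where it rises by at most `2δ`.
Hence every band but the first is at most `4δ` times the gap before it, and the gaps telescope
to at most `b - a`.
-/

open Set

theorem ConvexOn.deriv_mul_sub_le_sub {S : Set ℝ} {f : ℝ → ℝ} {a x y : ℝ}
    (hf : ConvexOn ℝ S f) (ha : a ∈ S) (hx : x ∈ S) (hy : y ∈ S) (hax : a ≤ x) (hxy : x ≤ y)
    (hd : DifferentiableAt ℝ f a) : deriv f a * (y - x) ≤ f y - f x := by
  rcases hxy.eq_or_lt with rfl | hxy
  · simp
  suffices deriv f a ≤ (f y - f x) / (y - x) from (le_div_iff₀ (sub_pos.2 hxy)).1 this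
  rcases hax.eq_or_lt with rfl | hax
  · simpa [slope_def_field] using hf.deriv_le_slope hx hy hxy hd
  calc deriv f a ≤ (f x - f a) / (x - a) := by
        simpa [slope_def_field] using hf.deriv_le_slope ha hx hax hd
    _ ≤ (f y - f x) / (y - x) := hf.slope_mono_adjacent ha hy hax hxy

theorem ConvexOn.mul_sub_le_mul_sub {S : Set ℝ} {f : ℝ → ℝ} {x y z : ℝ}
    (hf : ConvexOn ℝ S f) (hx : x ∈ S) (hz : z ∈ S) (hxy : x < y) (hyz : y ≤ z) :
    (f y - f x) * (z - y) ≤ (f z - f y) * (y - x) := by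
  rcases hyz.eq_or_lt with rfl | hyz
  · simp
  have := hf.slope_mono_adjacent hx hz hxy hyz
  rwa [div_le_div_iff₀ (sub_pos.2 hxy) (sub_pos.2 hyz)] at this

theorem Finset.sum_Icc_sub_le_of_le_mul_gap {u v : ℤ → ℝ} {c : ℝ} {m M : ℤ} (hmM : m ≤ M)
    (hc : 0 ≤ c) (huv : ∀ k ∈ Finset.Icc m M, u k ≤ v k)
    (hgap : ∀ k ∈ Finset.Ioc m M, v k - u k ≤ c * (u k - v (k - 1))) :
    ∑ k ∈ Finset.Icc m M, (v k - u k) ≤ v m - u m + c * (u M - u m) := by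
  induction M, hmM using Int.leInduction with
  | base => simp
  | succ M hmM ih =>
    have huvM : u M ≤ v M := huv M (by simp [hmM])
    have hlast := hgap (M + 1) (by simp; omega)
    rw [add_sub_cancel_right] at hlast
    rw [← Finset.insert_Icc_right_eq_Icc_add_one (by omega),
      Finset.sum_insert (by simp)]
    have := ih (fun k hk => huv k (by simp at hk ⊢; omega))
      (fun k hk => hgap k (by simp at hk ⊢; omega))
    nlinarith

def levelBand (f : ℝ → ℝ) (a b δ : ℝ) (k : ℤ) : Set ℝ :=
  Icc a b ∩ f ⁻¹' Icc (k - δ) (k + δ)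

section levelBand

variable {f : ℝ → ℝ} {a b δ : ℝ}

theorem isCompact_levelBand (hf : ContinuousOn f (Icc a b)) (k : ℤ) :
    IsCompact (levelBand f a b δ k) :=
  isCompact_Icc.of_isClosed_subset (hf.preimage_isClosed_of_isClosed isClosed_Icc isClosed_Icc)
    inter_subset_left

theorem levelBand_nonempty (hab : a ≤ b) (hmono : MonotoneOn f (Icc a b))
    (hf : ContinuousOn f (Icc a b)) (hδ : 0 ≤ δ) {k : ℤ}
    (hk : k ∈ Finset.Icc ⌈f a - δ⌉ ⌊f b + δ⌋) : (levelBand f a b δ k).Nonempty := by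
  rw [Finset.mem_Icc, Int.ceil_le, Int.le_floor] at hk
  have hfab : f a ≤ f b := hmono (left_mem_Icc.2 hab) (right_mem_Icc.2 hab) hab
  obtain ⟨x, hx, hfx⟩ := intermediate_value_Icc hab hf
    (show max (f a) (min (k : ℝ) (f b)) ∈ Icc (f a) (f b) from
      ⟨le_max_left _ _, max_le hfab (min_le_right _ _)⟩)
  refine ⟨x, hx, ?_⟩
  rw [mem_preimage, hfx]
  exact ⟨le_max_of_le_right (le_min (by linarith) (by linarith)),
    max_le (by linarith) ((min_le_left _ _).trans (by linarith))⟩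

theorem setOf_abs_sub_round_le_subset_iUnion_levelBand (hmono : MonotoneOn f (Icc a b)) :
    {α ∈ Icc a b | |f α - round (f α)| ≤ δ} ⊆
      ⋃ k ∈ Finset.Icc ⌈f a - δ⌉ ⌊f b + δ⌋, levelBand f a b δ k := by
  rintro α ⟨hα, hround⟩
  have hfa : f a ≤ f α := hmono (left_mem_Icc.2 (hα.1.trans hα.2)) hα hα.1
  have hfb : f α ≤ f b := hmono hα (right_mem_Icc.2 (hα.1.trans hα.2)) hα.2
  rw [abs_le] at hround
  refine mem_iUnion₂.2 ⟨round (f α), ?_, hα, by constructor <;> linarith [hround.1, hround.2]⟩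
  rw [Finset.mem_Icc, Int.ceil_le, Int.le_floor]
  constructor <;> linarith [hround.1, hround.2]

theorem sub_le_of_mem_levelBand (hconv : ConvexOn ℝ (Icc a b) f) (hfa : 0 < deriv f a)
    {k : ℤ} {x y : ℝ} (hx : x ∈ levelBand f a b δ k) (hy : y ∈ levelBand f a b δ k)
    (hxy : x ≤ y) : y - x ≤ 2 * δ / deriv f a := by
  have hd : DifferentiableAt ℝ f a := differentiableAt_of_deriv_ne_zero hfa.ne'
  have := hconv.deriv_mul_sub_le_sub (left_mem_Icc.2 (hx.1.1.trans hx.1.2)) hx.1 hy.1 hx.1.1 hxy hd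
  rw [le_div_iff₀ hfa]
  linarith [hx.2.1, hy.2.2]

theorem sub_le_mul_gap_of_mem_levelBand (hmono : MonotoneOn f (Icc a b))
    (hconv : ConvexOn ℝ (Icc a b) f) (hδ : 4 * δ ≤ 1) {k : ℤ} {x y z : ℝ}
    (hx : x ∈ levelBand f a b δ (k - 1)) (hy : y ∈ levelBand f a b δ k)
    (hz : z ∈ levelBand f a b δ k) (hyz : y ≤ z) : z - y ≤ 4 * δ * (y - x) := by
  obtain ⟨hxI, -, hfx⟩ := hx
  obtain ⟨hyI, hfy, -⟩ := hy
  obtain ⟨hzI, -, hfz⟩ := hz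
  push_cast at hfx
  have hrise : 1 / 2 ≤ f y - f x := by linarith
  have hxy : x < y := lt_of_not_ge fun hyx => by linarith [hmono hyI hxI hyx]
  have := hconv.mul_sub_le_mul_sub hxI hzI hxy hyz
  nlinarith

theorem sum_sSup_sub_sInf_levelBand_le (hab : a ≤ b) (hmono : MonotoneOn f (Icc a b))
    (hf : ContinuousOn f (Icc a b)) (hconv : ConvexOn ℝ (Icc a b) f) (hfa : 0 < deriv f a)
    (hδ₀ : 0 ≤ δ) (hδ : 4 * δ ≤ 1) :
    ∑ k ∈ Finset.Icc ⌈f a - δ⌉ ⌊f b + δ⌋,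
        (sSup (levelBand f a b δ k) - sInf (levelBand f a b δ k)) ≤
      2 * δ / deriv f a + 4 * δ * (b - a) := by
  set m := ⌈f a - δ⌉
  set M := ⌊f b + δ⌋
  set u : ℤ → ℝ := fun k => sInf (levelBand f a b δ k)
  set v : ℤ → ℝ := fun k => sSup (levelBand f a b δ k)
  have hu : ∀ k ∈ Finset.Icc m M, u k ∈ levelBand f a b δ k := fun k hk =>
    (isCompact_levelBand hf k).sInf_mem (levelBand_nonempty hab hmono hf hδ₀ hk)
  have hv : ∀ k ∈ Finset.Icc m M, v k ∈ levelBand f a b δ k := fun k hk =>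
    (isCompact_levelBand hf k).sSup_mem (levelBand_nonempty hab hmono hf hδ₀ hk)
  have huv : ∀ k ∈ Finset.Icc m M, u k ≤ v k := fun k hk =>
    csInf_le (isCompact_levelBand hf k).bddBelow (hv k hk)
  rcases lt_or_ge M m with hMm | hmM
  · rw [Finset.Icc_eq_empty_of_lt hMm, Finset.sum_empty]
    positivity
  have hm : m ∈ Finset.Icc m M := Finset.left_mem_Icc.2 hmM
  have hM : M ∈ Finset.Icc m M := Finset.right_mem_Icc.2 hmM
  have hgap : ∀ k ∈ Finset.Ioc m M, v k - u k ≤ 4 * δ * (u k - v (k - 1)) := fun k hk' => by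
    have hk : k ∈ Finset.Icc m M := Finset.Ioc_subset_Icc_self hk'
    replace hk' : k - 1 ∈ Finset.Icc m M := by
      simp only [Finset.mem_Ioc, Finset.mem_Icc] at hk' ⊢
      omega
    exact sub_le_mul_gap_of_mem_levelBand hmono hconv hδ (hv _ hk') (hu k hk) (hv k hk)
      (huv k hk)
  calc ∑ k ∈ Finset.Icc m M, (v k - u k) ≤ v m - u m + 4 * δ * (u M - u m) :=
        Finset.sum_Icc_sub_le_of_le_mul_gap hmM (by positivity) huv hgap
    _ ≤ 2 * δ / deriv f a + 4 * δ * (b - a) := by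
        gcongr
        · exact sub_le_of_mem_levelBand hconv hfa (hu m hm) (hv m hm) (huv m hm)
        · exact (hu M hM).1.2
        · exact (hu m hm).1.1

theorem volume_setOf_abs_sub_round_le (hab : a ≤ b) (hmono : MonotoneOn f (Icc a b))
    (hf : ContinuousOn f (Icc a b)) (hconv : ConvexOn ℝ (Icc a b) f) (hfa : 0 < deriv f a)
    (hδ₀ : 0 ≤ δ) (hδ : 4 * δ ≤ 1) :
    volume {α ∈ Icc a b | |f α - round (f α)| ≤ δ} ≤
      ENNReal.ofReal (2 * δ / deriv f a + 4 * δ * (b - a)) := by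
  have hbdd (k : ℤ) := (isCompact_levelBand (δ := δ) hf k).isBounded
  calc volume {α ∈ Icc a b | |f α - round (f α)| ≤ δ}
      ≤ ∑ k ∈ Finset.Icc ⌈f a - δ⌉ ⌊f b + δ⌋, volume (levelBand f a b δ k) :=
        (measure_mono (setOf_abs_sub_round_le_subset_iUnion_levelBand hmono)).trans
          (measure_biUnion_finset_le _ _)
    _ ≤ ∑ k ∈ Finset.Icc ⌈f a - δ⌉ ⌊f b + δ⌋,
          ENNReal.ofReal (sSup (levelBand f a b δ k) - sInf (levelBand f a b δ k)) :=
        Finset.sum_le_sum fun k _ => (Real.volume_le_diam _).trans_eq (Real.ediam_eq (hbdd k))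
    _ = ENNReal.ofReal (∑ k ∈ Finset.Icc ⌈f a - δ⌉ ⌊f b + δ⌋,
          (sSup (levelBand f a b δ k) - sInf (levelBand f a b δ k))) :=
        (ENNReal.ofReal_sum_of_nonneg fun k _ => Real.diam_eq (hbdd k) ▸ Metric.diam_nonneg).symm
    _ ≤ ENNReal.ofReal (2 * δ / deriv f a + 4 * δ * (b - a)) :=
        ENNReal.ofReal_le_ofReal
          (sum_sSup_sub_sInf_levelBand_le hab hmono hf hconv hfa hδ₀ hδ)

end levelBand

/-- Lemma 2.1 of Baker: for a strictly increasing differentiable convex function `f`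
on `[a,b]` with `f'(a) > 0` and `s > 0`, for all sufficiently large `N` the measure of
the set of `α ∈ [a,b]` with `f(α)` within `s/N` of an integer is at most
`4s(b-a)/N + C·4s/(N f'(a))`. -/
theorem measure_near_integer_of_convex (a b s : ℝ) (hab : a ≤ b) (hs : 0 < s)
    (f : ℝ → ℝ)
    (hmono : StrictMonoOn f (Set.Icc a b))
    (hdiff : DifferentiableOn ℝ f (Set.Icc a b))
    (hconv : ConvexOn ℝ (Set.Icc a b) f)
    (hfa : 0 < deriv f a) :
    ∃ C : ℝ, 0 < C ∧ ∃ N₀ : ℕ, ∀ N : ℕ, N₀ ≤ N →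
      (volume {α ∈ Set.Icc a b | |f α - round (f α)| ≤ s / N}).toReal ≤
        4 * s * (b - a) / N + C * (4 * s) / (N * deriv f a) := by
  refine ⟨1 / 2, one_half_pos, ⌈4 * s⌉₊, fun N hN => ?_⟩
  have hsN : 4 * s ≤ N := Nat.ceil_le.1 hN
  have hN : (0 : ℝ) < N := by linarith
  have hδ : 4 * (s / N) ≤ 1 := by rw [← mul_div_assoc, div_le_one hN]; exact hsN
  have hbound := volume_setOf_abs_sub_round_le hab hmono.monotoneOn hdiff.continuousOn hconv hfa
    (by positivity) hδ
  calc (volume {α ∈ Set.Icc a b | |f α - round (f α)| ≤ s / N}).toReal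
      ≤ 2 * (s / N) / deriv f a + 4 * (s / N) * (b - a) :=
        ENNReal.toReal_le_of_le_ofReal (by have := sub_nonneg.2 hab; positivity) hbound
    _ = 4 * s * (b - a) / N + 1 / 2 * (4 * s) / (N * deriv f a) := by
        field_simp
        ring
end

section
/- Fix A > 1 and s > 0, and let n > m be positive integers. Then ∫_A^{A+1} χ_{s/N}(x^n − x^m) dx = O(1/N), where χ_{s/N} is the indicator function of the set ℤ + [−2s/N, 2s/N], and the implied constant depends only on A and s. -/
/-! On `[A, A + 1]` the derivative of `f x = x ^ n - x ^ m` is increasing and at least `1`. Over a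
stretch `[a, c]` on which `f` grows by at most `1`, `f` comes within `δ` of at most two integers,
and by the mean value theorem each of the two preimages has length at most `2δ / f' a`. Cutting
`[A, A + 1]` at the points where `f` has grown by one, the mean value theorem also gives
`1 / f' c ≤ c - a` for consecutive cut points `a < c`, so the bounds telescope to
`4δ (1 / f' A + 1) ≤ 8δ`, uniformly in `n` and `m`. -/

open MeasureTheory Set

def nearIntegerSet (f : ℝ → ℝ) (δ : ℝ) : Set ℝ := {x | |f x - round (f x)| ≤ δ}

lemma measurableSet_nearIntegerSet {f : ℝ → ℝ} (hf : Measurable f) (δ : ℝ) :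
    MeasurableSet (nearIntegerSet f δ) := by
  have hround : Measurable fun x => round (f x) := by
    simp_rw [round_eq]
    exact (hf.add_const _).floor
  exact measurableSet_le ((hf.sub (measurable_from_top.comp hround)).abs) measurable_const

lemma round_le_round {α : Type*} [Field α] [LinearOrder α] [IsStrictOrderedRing α] [FloorRing α]
    {x y : α} (h : x ≤ y) : round x ≤ round y := by
  simp only [round_eq]
  exact Int.floor_le_floor (by linarith)

lemma Real.volume_le_ofReal_of_forall_sub_le {s : Set ℝ} {d : ℝ}
    (h : ∀ x ∈ s, ∀ y ∈ s, x ≤ y → y - x ≤ d) : volume s ≤ ENNReal.ofReal d := by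
  refine (Real.volume_le_diam s).trans (Metric.ediam_le_of_forall_dist_le fun x hx y hy => ?_)
  rw [Real.dist_eq]
  rcases le_total x y with hxy | hxy
  · rw [abs_sub_comm, abs_of_nonneg (sub_nonneg.2 hxy)]
    exact h x hx y hy hxy
  · rw [abs_of_nonneg (sub_nonneg.2 hxy)]
    exact h y hy x hx hxy

section MonotoneDeriv

variable {f : ℝ → ℝ} {a b δ : ℝ}

lemma deriv_mul_sub_le_sub_of_monotoneOn (hf : DifferentiableOn ℝ f (Icc a b))
    (hf' : MonotoneOn (deriv f) (Icc a b)) {x y : ℝ} (hx : x ∈ Icc a b) (hy : y ∈ Icc a b)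
    (hxy : x ≤ y) : deriv f x * (y - x) ≤ f y - f x := by
  have hsub : Icc x y ⊆ Icc a b := Icc_subset_Icc hx.1 hy.2
  refine (convex_Icc x y).mul_sub_le_image_sub_of_le_deriv (hf.mono hsub).continuousOn
    ((hf.mono hsub).mono interior_subset) (fun z hz => ?_) x ⟨le_rfl, hxy⟩ y ⟨hxy, le_rfl⟩ hxy
  rw [interior_Icc] at hz
  exact hf' hx (hsub (Ioo_subset_Icc_self hz)) hz.1.le

lemma sub_le_deriv_mul_sub_of_monotoneOn (hf : DifferentiableOn ℝ f (Icc a b))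
    (hf' : MonotoneOn (deriv f) (Icc a b)) {x y : ℝ} (hx : x ∈ Icc a b) (hy : y ∈ Icc a b)
    (hxy : x ≤ y) : f y - f x ≤ deriv f y * (y - x) := by
  have hsub : Icc x y ⊆ Icc a b := Icc_subset_Icc hx.1 hy.2
  refine (convex_Icc x y).image_sub_le_mul_sub_of_deriv_le (hf.mono hsub).continuousOn
    ((hf.mono hsub).mono interior_subset) (fun z hz => ?_) x ⟨le_rfl, hxy⟩ y ⟨hxy, le_rfl⟩ hxy
  rw [interior_Icc] at hz
  exact hf' (hsub (Ioo_subset_Icc_self hz)) hy hz.2.le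

lemma monotoneOn_of_monotoneOn_deriv (hf : DifferentiableOn ℝ f (Icc a b))
    (hf' : MonotoneOn (deriv f) (Icc a b)) (ha : 0 ≤ deriv f a) : MonotoneOn f (Icc a b) := by
  intro x hx y hy hxy
  have hax : deriv f a ≤ deriv f x := hf' (left_mem_Icc.2 (hx.1.trans hx.2)) hx hx.1
  nlinarith [deriv_mul_sub_le_sub_of_monotoneOn hf hf' hx hy hxy]

lemma volume_Icc_sep_abs_sub_le_le (hf : DifferentiableOn ℝ f (Icc a b))
    (hf' : MonotoneOn (deriv f) (Icc a b)) (ha : 0 < deriv f a) (c : ℝ) :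
    volume {x ∈ Icc a b | |f x - c| ≤ δ} ≤ ENNReal.ofReal (2 * δ / deriv f a) := by
  refine Real.volume_le_ofReal_of_forall_sub_le fun x hx y hy hxy => ?_
  have hax : deriv f a ≤ deriv f x := hf' (left_mem_Icc.2 (hx.1.1.trans hx.1.2)) hx.1 hx.1.1
  have hmvt := deriv_mul_sub_le_sub_of_monotoneOn hf hf' hx.1 hy.1 hxy
  have hfx := abs_le.1 hx.2
  have hfy := abs_le.1 hy.2
  rw [le_div_iff₀ ha]
  nlinarith

lemma volume_nearIntegerSet_inter_Icc_le_of_sub_le_one (hf : DifferentiableOn ℝ f (Icc a b))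
    (hf' : MonotoneOn (deriv f) (Icc a b)) (ha : 0 < deriv f a) (hδ : 0 ≤ δ)
    (hfab : f b - f a ≤ 1) :
    volume (nearIntegerSet f δ ∩ Icc a b) ≤ ENNReal.ofReal (4 * δ / deriv f a) := by
  set E : ℤ → Set ℝ := fun k => {x ∈ Icc a b | |f x - k| ≤ δ}
  have hfmono := monotoneOn_of_monotoneOn_deriv hf hf' ha.le
  have hcover : nearIntegerSet f δ ∩ Icc a b ⊆ E (round (f a)) ∪ E (round (f a) + 1) := by
    rintro x ⟨hxδ, hx⟩
    have hab : a ≤ b := hx.1.trans hx.2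
    have hlo := round_le_round (hfmono (left_mem_Icc.2 hab) hx hx.1)
    have hhi : round (f x) ≤ round (f a) + 1 := by
      rw [← round_add_one]
      exact round_le_round (by linarith [hfmono hx (right_mem_Icc.2 hab) hx.2])
    rcases (show round (f x) = round (f a) ∨ round (f x) = round (f a) + 1 by omega) with h | h
    · exact Or.inl ⟨hx, h ▸ hxδ⟩
    · exact Or.inr ⟨hx, h ▸ hxδ⟩
  calc volume (nearIntegerSet f δ ∩ Icc a b)
      ≤ volume (E (round (f a))) + volume (E (round (f a) + 1)) :=
        (measure_mono hcover).trans (measure_union_le _ _)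
    _ ≤ ENNReal.ofReal (2 * δ / deriv f a) + ENNReal.ofReal (2 * δ / deriv f a) := by
        gcongr <;> exact volume_Icc_sep_abs_sub_le_le hf hf' ha _
    _ = ENNReal.ofReal (4 * δ / deriv f a) := by
        rw [← ENNReal.ofReal_add (by positivity) (by positivity)]
        ring_nf

lemma volume_nearIntegerSet_inter_Icc_le (hf : DifferentiableOn ℝ f (Icc a b))
    (hf' : MonotoneOn (deriv f) (Icc a b)) (ha : 0 < deriv f a) (hδ : 0 ≤ δ) (hab : a ≤ b) :
    volume (nearIntegerSet f δ ∩ Icc a b) ≤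
      ENNReal.ofReal (4 * δ * (1 / deriv f a + (b - a))) := by
  obtain ⟨j, hj⟩ : ∃ j : ℕ, f b - f a ≤ j + 1 :=
    (exists_nat_ge (f b - f a)).imp fun j hj => by linarith
  induction j generalizing a with
  | zero =>
    refine (volume_nearIntegerSet_inter_Icc_le_of_sub_le_one hf hf' ha hδ (by simpa using hj)).trans
      (ENNReal.ofReal_le_ofReal ?_)
    rw [mul_add, mul_one_div]
    nlinarith [mul_nonneg hδ (sub_nonneg.2 hab)]
  | succ j ih =>
    by_cases hj' : f b - f a ≤ j + 1
    · exact ih hf hf' ha hab hj'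
    obtain ⟨c, hc, hfc⟩ : ∃ c ∈ Icc a b, f c = f a + 1 :=
      intermediate_value_Icc hab hf.continuousOn ⟨by linarith, by linarith⟩
    have hac : Icc a c ⊆ Icc a b := Icc_subset_Icc_right hc.2
    have hcb : Icc c b ⊆ Icc a b := Icc_subset_Icc_left hc.1
    have hc_pos : 0 < deriv f c := ha.trans_le (hf' (left_mem_Icc.2 hab) hc hc.1)
    have hc_inv : 1 / deriv f c ≤ c - a := by
      rw [div_le_iff₀ hc_pos]
      linarith [sub_le_deriv_mul_sub_of_monotoneOn hf hf' (left_mem_Icc.2 hab) hc hc.1]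
    calc volume (nearIntegerSet f δ ∩ Icc a b)
        ≤ volume (nearIntegerSet f δ ∩ Icc a c) + volume (nearIntegerSet f δ ∩ Icc c b) := by
          rw [← Icc_union_Icc_eq_Icc hc.1 hc.2, inter_union_distrib_left]
          exact measure_union_le _ _
      _ ≤ ENNReal.ofReal (4 * δ / deriv f a) +
            ENNReal.ofReal (4 * δ * (1 / deriv f c + (b - c))) :=
          add_le_add
            (volume_nearIntegerSet_inter_Icc_le_of_sub_le_one (hf.mono hac) (hf'.mono hac) ha hδ
              (by linarith))
            (ih (hf.mono hcb) (hf'.mono hcb) hc_pos hc.2 (by push_cast at hj; linarith))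
      _ ≤ ENNReal.ofReal (4 * δ * (1 / deriv f a + (b - a))) := by
          have hbc : 0 ≤ b - c := sub_nonneg.2 hc.2
          rw [← ENNReal.ofReal_add (by positivity) (by positivity)]
          refine ENNReal.ofReal_le_ofReal ?_
          have hstep : 4 * δ * (1 / deriv f c) ≤ 4 * δ * (c - a) := by gcongr
          rw [div_eq_mul_one_div (4 * δ)]
          linear_combination hstep

end MonotoneDeriv

lemma intervalIntegral_indicator_one {s : Set ℝ} (hs : MeasurableSet s) {a b : ℝ}
    (hab : a ≤ b) : ∫ x in a..b, s.indicator 1 x = volume.real (s ∩ Ioc a b) := by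
  rw [intervalIntegral.integral_of_le hab, integral_indicator_one hs, measureReal_restrict_apply hs]

lemma hasDerivAt_pow_sub_pow {m n : ℕ} (hm : 0 < m) (hmn : m ≤ n) (x : ℝ) :
    HasDerivAt (fun x : ℝ => x ^ n - x ^ m) (x ^ (m - 1) * (n * x ^ (n - m) - m)) x := by
  refine ((hasDerivAt_pow n x).sub (hasDerivAt_pow m x)).congr_deriv ?_
  rw [show n - 1 = m - 1 + (n - m) by omega, pow_add]
  ring

lemma monotoneOn_pow_mul_sub {m n : ℕ} (hmn : m ≤ n) :
    MonotoneOn (fun x : ℝ => x ^ (m - 1) * (n * x ^ (n - m) - m)) (Ici 1) := by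
  intro x hx y hy hxy
  have hx0 : (0 : ℝ) ≤ x := zero_le_one.trans hx
  have hmn' : (m : ℝ) ≤ n := by exact_mod_cast hmn
  have hfac : 0 ≤ (n : ℝ) * x ^ (n - m) - m := by
    nlinarith [one_le_pow₀ (n := n - m) (show (1 : ℝ) ≤ x from hx)]
  exact mul_le_mul (by gcongr) (by gcongr) hfac (pow_nonneg (hx0.trans hxy) _)

lemma one_le_pow_mul_sub {m n : ℕ} (hmn : m < n) {x : ℝ} (hx : 1 ≤ x) :
    1 ≤ x ^ (m - 1) * (n * x ^ (n - m) - m) := by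
  have hmn' : (m : ℝ) + 1 ≤ n := by exact_mod_cast hmn
  refine one_le_mul_of_one_le_of_one_le (one_le_pow₀ hx) ?_
  nlinarith [one_le_pow₀ (n := n - m) hx]

/-- For fixed `A > 1` and `s > 0`, with `χ` the indicator of `ℤ + [-2s/N, 2s/N]`,
we have `∫_A^{A+1} χ(x^n - x^m) dx = O(1/N)` uniformly over integers `n > m ≥ 1`,
the implied constant depending only on `A` and `s`. -/
theorem integral_indicator_near_integer_bound (A s : ℝ) (hA : 1 < A) (hs : 0 < s) :
    ∃ C : ℝ, 0 < C ∧ ∀ n m N : ℕ, 0 < m → m < n → 0 < N →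
      (∫ x in A..(A + 1),
          (if |x ^ n - x ^ m - round (x ^ n - x ^ m)| ≤ 2 * s / N then (1 : ℝ) else 0))
        ≤ C / N := by
  refine ⟨16 * s, by positivity, fun n m N hm hmn hN => ?_⟩
  set f : ℝ → ℝ := fun x => x ^ n - x ^ m
  set δ := 2 * s / N
  have hderiv : deriv f = fun x : ℝ => x ^ (m - 1) * ((n : ℝ) * x ^ (n - m) - m) :=
    funext fun x => (hasDerivAt_pow_sub_pow hm hmn.le x).deriv
  have hmono : MonotoneOn (deriv f) (Icc A (A + 1)) :=
    hderiv ▸ (monotoneOn_pow_mul_sub hmn.le).mono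
      (Icc_subset_Ici_self.trans (Ici_subset_Ici.2 hA.le))
  have hA' : 1 ≤ deriv f A := hderiv ▸ one_le_pow_mul_sub hmn hA.le
  have hvol : volume (nearIntegerSet f δ ∩ Icc A (A + 1)) ≤ ENNReal.ofReal (16 * s / N) := by
    refine (volume_nearIntegerSet_inter_Icc_le (by fun_prop) hmono (by linarith) (by positivity)
      (by linarith)).trans (ENNReal.ofReal_le_ofReal ?_)
    calc 4 * δ * (1 / deriv f A + (A + 1 - A)) ≤ 4 * δ * (1 + 1) := by
          gcongr
          · exact (div_le_one (by linarith)).2 hA'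
          · linarith
      _ = 16 * s / N := by ring
  calc (∫ x in A..(A + 1), if |f x - round (f x)| ≤ δ then (1 : ℝ) else 0)
      = ∫ x in A..(A + 1), (nearIntegerSet f δ).indicator 1 x := by
        simp only [Set.indicator_apply, nearIntegerSet, mem_ofPred_eq, Pi.one_apply]
    _ = volume.real (nearIntegerSet f δ ∩ Ioc A (A + 1)) :=
        intervalIntegral_indicator_one (measurableSet_nearIntegerSet (by fun_prop) δ)
          (by linarith)
    _ ≤ 16 * s / N := ENNReal.toReal_le_of_le_ofReal (by positivity)
        ((measure_mono (inter_subset_inter_right _ Ioc_subset_Icc_self)).trans hvol)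
end

section
/- Fix A > 1 and s > 0. There exist constants C > 0 and N_0 ∈ ℕ such that for all integers n > m_1 > m_2 with m_1 ≥ N_0, and all N ∈ ℕ, ∫_A^{A+1} χ(x^n − x^{m_1}) · χ(x^n − x^{m_2}) dx ≤ C·(1/N² + m_1 · A^{(m_1−n)/2} / (N · n · (n − m_1))), where χ is the indicator of ℤ + [−2s/N, 2s/N]. -/
/-!
Put `δ = 2s/N`. Where both indicators equal one, `x^m₁ - x^m₂` is also within `2δ` of an
integer. Cut `[A, A+1]` into `m₁` intervals of length `1/m₁`. On such an interval starting at
`u`, `x^m₁ - x^m₂` has slope comparable to `m₁ u^(m₁-1)`, so it is near an integer only on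
`O(u^(m₁-1))` subintervals of length `O(δ / (m₁ u^(m₁-1)))`. On each of those, `x^n - x^m₁`,
whose slope `≍ n x^(n-1)` is nearly constant on scales `1/n`, is near an integer on a set of
measure `O(δ · length + δ / (n u^(n-1)))`. Summing gives `O(δ² + m₁ δ / (n A^(n-m₁)))`, and
`t / A^t ≤ (2 / log A) A^(-t/2)` puts the second term in the stated form.
-/

open MeasureTheory Set

noncomputable def nearInt (δ : ℝ) : Set ℝ := ⋃ j : ℤ, Metric.closedBall (j : ℝ) δ

theorem mem_nearInt {t δ : ℝ} : t ∈ nearInt δ ↔ ∃ j : ℤ, |t - j| ≤ δ := by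
  simp [nearInt, Real.dist_eq]

theorem mem_nearInt_iff_abs_sub_round_le {t δ : ℝ} : t ∈ nearInt δ ↔ |t - round t| ≤ δ :=
  mem_nearInt.trans ⟨fun ⟨j, hj⟩ => (round_le t j).trans hj, fun h => ⟨round t, h⟩⟩

theorem measurableSet_nearInt (δ : ℝ) : MeasurableSet (nearInt δ) :=
  .iUnion fun _ => measurableSet_closedBall

theorem sub_mem_nearInt {a b δ ε : ℝ} (ha : a ∈ nearInt δ) (hb : b ∈ nearInt ε) :
    a - b ∈ nearInt (δ + ε) := by
  obtain ⟨i, hi⟩ := mem_nearInt.1 ha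
  obtain ⟨j, hj⟩ := mem_nearInt.1 hb
  refine mem_nearInt.2 ⟨i - j, ?_⟩
  calc |a - b - ↑(i - j)| = |(a - i) - (b - j)| := by push_cast; ring_nf
    _ ≤ |a - i| + |b - j| := abs_sub _ _
    _ ≤ δ + ε := add_le_add hi hj

theorem card_Icc_ceil_floor_le {x y : ℝ} (h : x ≤ y + 1) :
    ((Finset.Icc ⌈x⌉ ⌊y⌋).card : ℝ) ≤ y - x + 1 := by
  rw [Int.card_Icc]
  rcases le_total (⌊y⌋ + 1 - ⌈x⌉) 0 with hle | hge
  · rw [Int.toNat_of_nonpos hle]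
    push_cast
    linarith
  · have hcast : (((⌊y⌋ + 1 - ⌈x⌉).toNat : ℤ) : ℝ) = ((⌊y⌋ + 1 - ⌈x⌉ : ℤ) : ℝ) := by
      rw [Int.toNat_of_nonneg hge]
    rw [Int.cast_natCast] at hcast
    rw [hcast]
    push_cast
    linarith [Int.floor_le y, Int.le_ceil x]

theorem exists_Icc_superset_of_forall_sub_le {P : Set ℝ} {a b r : ℝ} (hP : P ⊆ Icc a b)
    (hne : P.Nonempty) (hr : ∀ x ∈ P, ∀ y ∈ P, y - x ≤ r) :
    ∃ α β, a ≤ α ∧ α ≤ β ∧ β ≤ b ∧ β - α ≤ r ∧ P ⊆ Icc α β := by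
  have hbelow : BddBelow P := ⟨a, fun x hx => (hP hx).1⟩
  have habove : BddAbove P := ⟨b, fun x hx => (hP hx).2⟩
  refine ⟨sInf P, sSup P, le_csInf hne fun x hx => (hP hx).1, csInf_le_csSup hne hbelow habove,
    csSup_le hne fun x hx => (hP hx).2, ?_, fun x hx => ⟨csInf_le hbelow hx, le_csSup habove hx⟩⟩
  rw [sub_le_iff_le_add]
  refine csSup_le hne fun y hy => ?_
  rw [← sub_le_iff_le_add']
  exact le_csInf hne fun x hx => by linarith [hr x hx y hy]

theorem volume_Icc_add_mul_inter_le (T : Set ℝ) {u w : ℝ} (hw : 0 ≤ w) {B : ENNReal} (p : ℕ)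
    (hB : ∀ a, u ≤ a → a + w ≤ u + p * w → volume (Icc a (a + w) ∩ T) ≤ B) :
    volume (Icc u (u + p * w) ∩ T) ≤ p * B := by
  induction p with
  | zero =>
    simp only [CharP.cast_eq_zero, zero_mul, add_zero, Icc_self]
    exact (measure_mono_null inter_subset_left (measure_singleton u)).le
  | succ p ih =>
    have hsplit : Icc u (u + (p + 1 : ℕ) * w) ∩ T ⊆
        Icc u (u + p * w) ∩ T ∪ Icc (u + p * w) (u + p * w + w) ∩ T := by
      rw [← union_inter_distrib_right]
      refine inter_subset_inter_left T ((Icc_subset_Icc_union_Icc (b := u + p * w)).trans_eq ?_)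
      push_cast
      ring_nf
    calc volume (Icc u (u + (p + 1 : ℕ) * w) ∩ T)
        ≤ volume (Icc u (u + p * w) ∩ T) + volume (Icc (u + p * w) (u + p * w + w) ∩ T) :=
          (measure_mono hsplit).trans (measure_union_le _ _)
      _ ≤ p * B + B := by
          gcongr
          · exact ih fun a ha haw => hB a ha (by push_cast; linarith)
          · exact hB _ (by nlinarith) (by push_cast; linarith)
      _ = (p + 1 : ℕ) * B := by push_cast; ring

theorem exists_Icc_superset_Icc_inter_preimage_closedBall {g : ℝ → ℝ} {a b L c δ : ℝ}
    (hL : 0 < L) (hg : ∀ x ∈ Icc a b, ∀ y ∈ Icc a b, x ≤ y → L * (y - x) ≤ g y - g x)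
    (hne : (Icc a b ∩ g ⁻¹' Metric.closedBall c δ).Nonempty) :
    ∃ α β, a ≤ α ∧ α ≤ β ∧ β ≤ b ∧ β - α ≤ 2 * δ / L ∧
      Icc a b ∩ g ⁻¹' Metric.closedBall c δ ⊆ Icc α β := by
  refine exists_Icc_superset_of_forall_sub_le inter_subset_left hne
    fun x ⟨hx, hgx⟩ y ⟨hy, hgy⟩ => ?_
  rw [mem_preimage, Metric.mem_closedBall, Real.dist_eq, abs_le] at hgx hgy
  rcases le_total x y with hxy | hyx
  · rw [le_div_iff₀' hL]
    linarith [hg x hx y hy hxy]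
  · have : 0 ≤ δ := by linarith
    exact (sub_nonpos.2 hyx).trans (by positivity)

theorem volume_Icc_inter_preimage_nearInt_inter_le {g : ℝ → ℝ} {a b L D δ B : ℝ} (T : Set ℝ)
    (hab : a ≤ b) (hL : 0 < L) (hδ : 0 ≤ δ) (hB : 0 ≤ B)
    (hg : ∀ x ∈ Icc a b, ∀ y ∈ Icc a b, x ≤ y → L * (y - x) ≤ g y - g x)
    (hD : g b - g a ≤ D)
    (hT : ∀ α β, a ≤ α → α ≤ β → β ≤ b → β - α ≤ 2 * δ / L →
      volume (Icc α β ∩ T) ≤ ENNReal.ofReal B) :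
    volume (Icc a b ∩ g ⁻¹' nearInt δ ∩ T) ≤ ENNReal.ofReal ((D + 2 * δ + 1) * B) := by
  have ha : a ∈ Icc a b := left_mem_Icc.2 hab
  have hb : b ∈ Icc a b := right_mem_Icc.2 hab
  set J := Finset.Icc ⌈g a - δ⌉ ⌊g b + δ⌋
  have hcover : Icc a b ∩ g ⁻¹' nearInt δ ∩ T ⊆
      ⋃ j ∈ J, Icc a b ∩ g ⁻¹' Metric.closedBall (j : ℝ) δ ∩ T := by
    rintro x ⟨⟨hx, hgx⟩, hxT⟩
    obtain ⟨j, hj⟩ := mem_nearInt.1 hgx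
    have hgax : g a ≤ g x := by
      nlinarith [hg a ha x hx hx.1, mul_nonneg hL.le (sub_nonneg.2 hx.1)]
    have hgxb : g x ≤ g b := by
      nlinarith [hg x hx b hb hx.2, mul_nonneg hL.le (sub_nonneg.2 hx.2)]
    have hj' := abs_le.1 hj
    refine mem_iUnion₂.2 ⟨j, Finset.mem_Icc.2 ⟨Int.ceil_le.2 (by linarith [hj'.2]),
      Int.le_floor.2 (by linarith [hj'.1])⟩, ⟨hx, ?_⟩, hxT⟩
    rwa [mem_preimage, Metric.mem_closedBall, Real.dist_eq]
  have hpiece : ∀ j : ℤ,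
      volume (Icc a b ∩ g ⁻¹' Metric.closedBall (j : ℝ) δ ∩ T) ≤ ENNReal.ofReal B := by
    intro j
    rcases (Icc a b ∩ g ⁻¹' Metric.closedBall (j : ℝ) δ).eq_empty_or_nonempty with hP | hP
    · simp [hP]
    obtain ⟨α, β, haα, hαβ, hβb, hβα, hPαβ⟩ :=
      exists_Icc_superset_Icc_inter_preimage_closedBall hL hg hP
    exact (measure_mono (inter_subset_inter_left T hPαβ)).trans (hT α β haα hαβ hβb hβα)
  have hgab : L * (b - a) ≤ g b - g a := hg a ha b hb hab
  have hcard : (J.card : ℝ) ≤ D + 2 * δ + 1 := by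
    have := card_Icc_ceil_floor_le (x := g a - δ) (y := g b + δ) (by nlinarith)
    linarith
  calc volume (Icc a b ∩ g ⁻¹' nearInt δ ∩ T)
      ≤ ∑ j ∈ J, volume (Icc a b ∩ g ⁻¹' Metric.closedBall (j : ℝ) δ ∩ T) :=
        (measure_mono hcover).trans (measure_biUnion_finset_le _ _)
    _ ≤ ∑ _j ∈ J, ENNReal.ofReal B := Finset.sum_le_sum fun j _ => hpiece j
    _ = ENNReal.ofReal (J.card * B) := by
        rw [Finset.sum_const, nsmul_eq_mul, ENNReal.ofReal_mul (by positivity),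
          ENNReal.ofReal_natCast]
    _ ≤ ENNReal.ofReal ((D + 2 * δ + 1) * B) :=
        ENNReal.ofReal_le_ofReal (mul_le_mul_of_nonneg_right hcard hB)

theorem pow_pred_le_three_mul_pow_pred {a x : ℝ} {n : ℕ} (ha : 1 ≤ a) (hax : a ≤ x)
    (hxa : x ≤ a + 1 / n) : x ^ (n - 1) ≤ 3 * a ^ (n - 1) := by
  have hx : x ≤ a * (1 + (n : ℝ)⁻¹) := by
    have : 1 / (n : ℝ) ≤ a * (n : ℝ)⁻¹ := by
      rw [one_div]; exact le_mul_of_one_le_left (by positivity) ha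
    linarith
  have hbase : (1 + (n : ℝ)⁻¹) ^ (n - 1) ≤ 3 :=
    calc (1 + (n : ℝ)⁻¹) ^ (n - 1) ≤ (1 + (n : ℝ)⁻¹) ^ n :=
          pow_le_pow_right₀ (by simp) (Nat.sub_le n 1)
      _ ≤ Real.exp 1 := Real.one_add_inv_pow_le_exp
      _ ≤ 3 := (Real.exp_one_lt_d9.trans (by norm_num)).le
  calc x ^ (n - 1) ≤ (a * (1 + (n : ℝ)⁻¹)) ^ (n - 1) :=
        pow_le_pow_left₀ (by linarith) hx _
    _ = a ^ (n - 1) * (1 + (n : ℝ)⁻¹) ^ (n - 1) := mul_pow _ _ _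
    _ ≤ a ^ (n - 1) * 3 := by gcongr
    _ = 3 * a ^ (n - 1) := mul_comm _ _

theorem pow_sub_pow_sub_le {a b : ℝ} {n m : ℕ} (ha : 1 ≤ a) (hab : a ≤ b)
    (hb : b ≤ a + 1 / n) :
    (b ^ n - b ^ m) - (a ^ n - a ^ m) ≤ 3 * n * a ^ (n - 1) * (b - a) := by
  have hm : a ^ m ≤ b ^ m := pow_le_pow_left₀ (by linarith) hab m
  have hn : b ^ n - a ^ n ≤ (b - a) * n * b ^ (n - 1) := by
    have h := (le_abs_self _).trans (abs_pow_sub_pow_le b a n)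
    rwa [abs_of_nonneg (sub_nonneg.2 hab), abs_of_nonneg (by linarith : (0 : ℝ) ≤ b),
      abs_of_nonneg (by linarith : (0 : ℝ) ≤ a), max_eq_left hab] at h
  have h3 := pow_pred_le_three_mul_pow_pred ha hab hb
  have : (b - a) * n * b ^ (n - 1) ≤ (b - a) * n * (3 * a ^ (n - 1)) := by
    gcongr
  linarith

theorem one_sub_inv_mul_le_mul_pow_sub_mul_pow {A x : ℝ} {n m : ℕ} (hA : 1 < A) (hAx : A ≤ x)
    (hmn : m < n) :
    (1 - A⁻¹) * (n * x ^ (n - 1)) ≤ n * x ^ (n - 1) - m * x ^ (m - 1) := by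
  have hx : 1 ≤ x := by linarith
  have hpow : (m : ℝ) * x ^ (m - 1) * x = m * x ^ m := by
    cases m with
    | zero => simp
    | succ m => rw [Nat.add_sub_cancel, mul_assoc, ← pow_succ]
  have hm : (m : ℝ) * x ^ m ≤ n * x ^ (n - 1) :=
    mul_le_mul (by exact_mod_cast hmn.le) (pow_le_pow_right₀ hx (by omega)) (by positivity)
      (by positivity)
  have hA' : (m : ℝ) * x ^ (m - 1) * A ≤ n * x ^ (n - 1) := by
    rw [← hpow] at hm
    exact (mul_le_mul_of_nonneg_left hAx (by positivity)).trans hm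
  have : (m : ℝ) * x ^ (m - 1) ≤ n * x ^ (n - 1) * A⁻¹ := by
    rw [← div_eq_mul_inv, le_div_iff₀ (by linarith)]; exact hA'
  linarith

theorem mul_sub_le_pow_sub_pow_sub {A a x y : ℝ} {n m : ℕ} (hA : 1 < A) (hAa : A ≤ a)
    (hmn : m < n) (hax : a ≤ x) (hxy : x ≤ y) :
    (1 - A⁻¹) * (n * a ^ (n - 1)) * (y - x) ≤ (y ^ n - y ^ m) - (x ^ n - x ^ m) := by
  have hderiv : ∀ z, HasDerivAt (fun z : ℝ => z ^ n - z ^ m)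
      (n * z ^ (n - 1) - m * z ^ (m - 1)) z := fun z =>
    (hasDerivAt_pow n z).sub (hasDerivAt_pow m z)
  refine (convex_Ici a).mul_sub_le_image_sub_of_le_deriv
    (fun z _ => (hderiv z).continuousAt.continuousWithinAt)
    (fun z _ => (hderiv z).differentiableAt.differentiableWithinAt)
    (fun z hz => ?_) x hax y (hax.trans hxy) hxy
  rw [interior_Ici, mem_Ioi] at hz
  rw [(hderiv z).deriv]
  refine le_trans ?_ (one_sub_inv_mul_le_mul_pow_sub_mul_pow hA (hAa.trans hz.le) hmn)
  have : 0 < 1 - A⁻¹ := sub_pos.2 (inv_lt_one_of_one_lt₀ hA)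
  gcongr
  linarith

theorem volume_Icc_pow_sub_pow_mem_nearInt_le_of_le_one_div {A u v δ : ℝ} {n m : ℕ}
    (hA : 1 < A) (hAu : A ≤ u) (huv : u ≤ v) (hvu : v ≤ u + 1 / n) (hmn : m < n)
    (hδ : 0 ≤ δ) (hδ' : δ ≤ 1 / 4) :
    volume (Icc u v ∩ (fun x : ℝ => x ^ n - x ^ m) ⁻¹' nearInt δ) ≤
      ENNReal.ofReal (6 / (1 - A⁻¹) * δ * (v - u) + 3 / (1 - A⁻¹) * δ / (n * u ^ (n - 1))) := by
  set c := 1 - A⁻¹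
  have hc : 0 < c := sub_pos.2 (inv_lt_one_of_one_lt₀ hA)
  have hn : (0 : ℝ) < n := by exact_mod_cast (Nat.zero_le m).trans_lt hmn
  have hu : 1 ≤ u := by linarith
  set L := c * (n * u ^ (n - 1))
  have hL : 0 < L := by positivity
  have hvol := volume_Icc_inter_preimage_nearInt_inter_le (g := fun x : ℝ => x ^ n - x ^ m)
    (B := 2 * δ / L) univ huv hL hδ (by positivity)
    (fun x hx y _ hxy => mul_sub_le_pow_sub_pow_sub hA hAu hmn hx.1 hxy)
    (pow_sub_pow_sub_le hu huv hvu)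
    (fun α β _ hαβ _ hβα => by
      rw [inter_univ, Real.volume_Icc]; exact ENNReal.ofReal_le_ofReal hβα)
  rw [inter_univ] at hvol
  refine hvol.trans (ENNReal.ofReal_le_ofReal ?_)
  have hδ2 : (2 * δ + 1) * (2 * δ) ≤ 3 * δ := by nlinarith
  calc (3 * n * u ^ (n - 1) * (v - u) + 2 * δ + 1) * (2 * δ / L)
      = 6 / c * δ * (v - u) + (2 * δ + 1) * (2 * δ) / (c * (n * u ^ (n - 1))) := by
        simp only [L]; field_simp; ring
    _ ≤ 6 / c * δ * (v - u) + 3 * δ / (c * (n * u ^ (n - 1))) := by gcongr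
    _ = 6 / c * δ * (v - u) + 3 / c * δ / (n * u ^ (n - 1)) := by field_simp

theorem volume_Icc_pow_sub_pow_mem_nearInt_le {A u v δ : ℝ} {n m : ℕ} (hA : 1 < A)
    (hAu : A ≤ u) (huv : u ≤ v) (hmn : m < n) (hδ : 0 ≤ δ) (hδ' : δ ≤ 1 / 4) :
    volume (Icc u v ∩ (fun x : ℝ => x ^ n - x ^ m) ⁻¹' nearInt δ) ≤
      ENNReal.ofReal (9 / (1 - A⁻¹) * δ * (v - u) + 6 / (1 - A⁻¹) * δ / (n * u ^ (n - 1))) := by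
  set c := 1 - A⁻¹
  have hc : 0 < c := sub_pos.2 (inv_lt_one_of_one_lt₀ hA)
  have hn : (0 : ℝ) < n := by exact_mod_cast (Nat.zero_le m).trans_lt hmn
  have hu : 1 ≤ u ^ (n - 1) := one_le_pow₀ (by linarith)
  set p := ⌈n * (v - u)⌉₊ + 1
  have hp : (0 : ℝ) < p := by positivity
  have hnp : n * (v - u) ≤ p := by
    have := Nat.le_ceil (n * (v - u)); push_cast [p]; linarith
  have hpn : (p : ℝ) ≤ n * (v - u) + 2 := by
    have := Nat.ceil_lt_add_one (mul_nonneg hn.le (sub_nonneg.2 huv)); push_cast [p]; linarith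
  set w := (v - u) / p
  have hw : 0 ≤ w := div_nonneg (sub_nonneg.2 huv) hp.le
  have hpw : u + p * w = v := by simp only [w]; field_simp; ring
  have hwn : w ≤ 1 / n := by rw [div_le_div_iff₀ hp hn]; linarith
  set Q := 3 / c * δ / (n * u ^ (n - 1))
  have hsum := volume_Icc_add_mul_inter_le ((fun x : ℝ => x ^ n - x ^ m) ⁻¹' nearInt δ) hw p
    (B := ENNReal.ofReal (6 / c * δ * w + Q)) fun a hua _ => by
      refine (volume_Icc_pow_sub_pow_mem_nearInt_le_of_le_one_div hA (hAu.trans hua)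
        (le_add_of_nonneg_right hw) (by linarith) hmn hδ hδ').trans
        (ENNReal.ofReal_le_ofReal ?_)
      have : u ^ (n - 1) ≤ a ^ (n - 1) := pow_le_pow_left₀ (by linarith) hua _
      rw [add_sub_cancel_left]
      simp only [Q, c]
      gcongr
  rw [hpw, ← ENNReal.ofReal_natCast, ← ENNReal.ofReal_mul hp.le] at hsum
  refine hsum.trans (ENNReal.ofReal_le_ofReal ?_)
  have hQ : Q * (n * (v - u)) ≤ 3 / c * δ * (v - u) := by
    rw [div_mul_eq_mul_div, div_le_iff₀ (by positivity)]
    have : 0 ≤ 3 / c * δ * (v - u) * n := by have := sub_nonneg.2 huv; positivity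
    nlinarith
  calc p * (6 / c * δ * w + Q) = 6 / c * δ * (u + p * w - u) + p * Q := by ring
    _ ≤ 6 / c * δ * (v - u) + (n * (v - u) + 2) * Q := by
        rw [hpw]; gcongr
    _ = 6 / c * δ * (v - u) + Q * (n * (v - u)) + 2 * Q := by ring
    _ ≤ 9 / c * δ * (v - u) + 6 / c * δ / (n * u ^ (n - 1)) := by
        have h9 : 9 / c * δ * (v - u) = 6 / c * δ * (v - u) + 3 / c * δ * (v - u) := by ring
        have hQ2 : 2 * Q = 6 / c * δ / (n * u ^ (n - 1)) := by simp only [Q]; ring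
        linarith

theorem volume_Icc_pow_sub_pow_mem_nearInt_inter_le_of_le_one_div {A u v δ : ℝ} {n m₁ m₂ : ℕ}
    (hA : 1 < A) (hAu : A ≤ u) (huv : u ≤ v) (hvu : v ≤ u + 1 / m₁) (h21 : m₂ < m₁) (h1n : m₁ < n)
    (hδ : 0 ≤ δ) (hδ' : δ ≤ 1 / 4) :
    volume (Icc u v ∩ (fun x : ℝ => x ^ n - x ^ m₁) ⁻¹' nearInt δ ∩
        (fun x : ℝ => x ^ m₁ - x ^ m₂) ⁻¹' nearInt (2 * δ)) ≤
      ENNReal.ofReal (180 / (1 - A⁻¹) ^ 2 * (δ ^ 2 / m₁ + δ / (n * A ^ (n - m₁)))) := by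
  set F := (fun x : ℝ => x ^ n - x ^ m₁) ⁻¹' nearInt δ
  set c := 1 - A⁻¹
  have hc : 0 < c := sub_pos.2 (inv_lt_one_of_one_lt₀ hA)
  have hc1 : c ≤ 1 := sub_le_self 1 (inv_nonneg.2 (by linarith))
  have hm₁ : (0 : ℝ) < m₁ := by exact_mod_cast (Nat.zero_le m₂).trans_lt h21
  have hn : (0 : ℝ) < n := hm₁.trans (by exact_mod_cast h1n)
  have hu : 0 < u := by linarith
  set P := u ^ (m₁ - 1)
  have hP : 1 ≤ P := one_le_pow₀ (by linarith)
  set L := c * (m₁ * P)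
  have hL : 0 < L := by positivity
  set B := 9 / c * δ * (2 * (2 * δ) / L) + 6 / c * δ / (n * u ^ (n - 1))
  have hvol := volume_Icc_inter_preimage_nearInt_inter_le (g := fun x : ℝ => x ^ m₁ - x ^ m₂)
    (δ := 2 * δ) (B := B) F huv hL (by positivity) (by positivity)
    (fun x hx y _ hxy => mul_sub_le_pow_sub_pow_sub hA hAu h21 hx.1 hxy)
    (pow_sub_pow_sub_le (by linarith) huv hvu)
    (fun α β huα hαβ _ hβα => by
      refine (volume_Icc_pow_sub_pow_mem_nearInt_le hA (hAu.trans huα) hαβ h1n hδ hδ').trans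
        (ENNReal.ofReal_le_ofReal ?_)
      have : u ^ (n - 1) ≤ α ^ (n - 1) := pow_le_pow_left₀ hu.le huα _
      simp only [B, c]
      gcongr)
  rw [inter_right_comm] at hvol
  refine hvol.trans (ENNReal.ofReal_le_ofReal ?_)
  have hcount : 3 * m₁ * P * (v - u) + 2 * (2 * δ) + 1 ≤ 5 * P := by
    have : m₁ * (v - u) ≤ 1 := by
      rw [← le_div_iff₀' hm₁]; linarith
    nlinarith
  have hsplit : u ^ (n - 1) = P * u ^ (n - m₁) := by rw [← pow_add]; congr 1; omega
  have hAu' : A ^ (n - m₁) ≤ u ^ (n - m₁) := pow_le_pow_left₀ (by linarith) hAu _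
  have hc' : 30 / c ≤ 180 / c ^ 2 := by
    rw [div_le_div_iff₀ hc (by positivity)]; nlinarith
  calc (3 * m₁ * P * (v - u) + 2 * (2 * δ) + 1) * B ≤ 5 * P * B :=
        mul_le_mul_of_nonneg_right hcount (by positivity)
    _ = 180 / c ^ 2 * (δ ^ 2 / m₁) + 30 / c * (δ / (n * u ^ (n - m₁))) := by
        simp only [B, L, hsplit]; field_simp; ring
    _ ≤ 180 / c ^ 2 * (δ ^ 2 / m₁) + 180 / c ^ 2 * (δ / (n * A ^ (n - m₁))) := by gcongr
    _ = 180 / c ^ 2 * (δ ^ 2 / m₁ + δ / (n * A ^ (n - m₁))) := by ring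

theorem volume_Icc_pow_sub_pow_mem_nearInt_inter_le {A δ : ℝ} {n m₁ m₂ : ℕ} (hA : 1 < A)
    (h21 : m₂ < m₁) (h1n : m₁ < n) (hδ : 0 ≤ δ) :
    volume (Icc A (A + 1) ∩ (fun x : ℝ => x ^ n - x ^ m₁) ⁻¹' nearInt δ ∩
        (fun x : ℝ => x ^ n - x ^ m₂) ⁻¹' nearInt δ) ≤
      ENNReal.ofReal (180 / (1 - A⁻¹) ^ 2 * (δ ^ 2 + m₁ * δ / (n * A ^ (n - m₁)))) := by
  set F := (fun x : ℝ => x ^ n - x ^ m₁) ⁻¹' nearInt δ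
  set G := (fun x : ℝ => x ^ m₁ - x ^ m₂) ⁻¹' nearInt (2 * δ)
  have hc : 0 < 1 - A⁻¹ := sub_pos.2 (inv_lt_one_of_one_lt₀ hA)
  have hc1 : 1 - A⁻¹ ≤ 1 := sub_le_self 1 (inv_nonneg.2 (by linarith))
  have hm₁ : (0 : ℝ) < m₁ := by exact_mod_cast (Nat.zero_le m₂).trans_lt h21
  have hn : (0 : ℝ) < n := hm₁.trans (by exact_mod_cast h1n)
  have hrest : 0 ≤ m₁ * δ / (n * A ^ (n - m₁)) := by
    have : 0 < A := by linarith
    positivity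
  rcases le_or_gt δ (1 / 4) with hδ' | hδ'
  · have hsub : Icc A (A + 1) ∩ F ∩ (fun x : ℝ => x ^ n - x ^ m₂) ⁻¹' nearInt δ ⊆
        Icc A (A + m₁ * (1 / m₁)) ∩ (F ∩ G) := by
      rintro x ⟨⟨hx, hx₁⟩, hx₂⟩
      refine ⟨by rwa [mul_one_div_cancel hm₁.ne'], hx₁, ?_⟩
      have := sub_mem_nearInt hx₂ hx₁
      rwa [sub_sub_sub_cancel_left, ← two_mul] at this
    have hsum := volume_Icc_add_mul_inter_le (F ∩ G) (w := 1 / m₁) (by positivity) m₁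
      (B := ENNReal.ofReal (180 / (1 - A⁻¹) ^ 2 * (δ ^ 2 / m₁ + δ / (n * A ^ (n - m₁)))))
      fun a ha _ => by
        refine (measure_mono fun x hx => ?_).trans
          (volume_Icc_pow_sub_pow_mem_nearInt_inter_le_of_le_one_div hA ha
            (le_add_of_nonneg_right (by positivity)) le_rfl h21 h1n hδ hδ')
        exact ⟨⟨hx.1, hx.2.1⟩, hx.2.2⟩
    refine (measure_mono hsub).trans (hsum.trans_eq ?_)
    rw [← ENNReal.ofReal_natCast, ← ENNReal.ofReal_mul hm₁.le]
    congr 1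
    field_simp
  · calc volume (Icc A (A + 1) ∩ F ∩ (fun x : ℝ => x ^ n - x ^ m₂) ⁻¹' nearInt δ)
        ≤ volume (Icc A (A + 1)) := measure_mono (inter_subset_left.trans inter_subset_left)
      _ = ENNReal.ofReal 1 := by rw [Real.volume_Icc, add_sub_cancel_left]
      _ ≤ _ := by
        refine ENNReal.ofReal_le_ofReal ?_
        have : 180 ≤ 180 / (1 - A⁻¹) ^ 2 := by
          rw [le_div_iff₀ (by positivity)]; nlinarith
        nlinarith

theorem div_rpow_le {A : ℝ} (hA : 1 < A) (t : ℝ) :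
    t / A ^ t ≤ 2 / Real.log A * A ^ (-t / 2) := by
  have hA0 : 0 < A := by linarith
  have hlog : 0 < Real.log A := Real.log_pos hA
  have ht : t ≤ 2 / Real.log A * A ^ (t / 2) := by
    have := Real.add_one_le_exp (Real.log A * (t / 2))
    rw [← Real.rpow_def_of_pos hA0] at this
    rw [div_mul_eq_mul_div, le_div_iff₀ hlog]
    nlinarith
  rw [div_eq_mul_inv, ← Real.rpow_neg hA0.le]
  calc t * A ^ (-t) ≤ 2 / Real.log A * A ^ (t / 2) * A ^ (-t) :=
        mul_le_mul_of_nonneg_right ht (Real.rpow_nonneg hA0.le _)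
    _ = 2 / Real.log A * A ^ (-t / 2) := by
        rw [mul_assoc, ← Real.rpow_add hA0]; ring_nf

theorem div_mul_pow_sub_le {A ε : ℝ} (hA : 1 < A) (hε : 0 ≤ ε) {n m : ℕ} (hmn : m < n) :
    ε / (n * A ^ (n - m)) ≤
      2 / Real.log A * (ε * A ^ (((m : ℝ) - n) / 2) / (n * ((n : ℝ) - m))) := by
  have hn : (0 : ℝ) < n := by exact_mod_cast (Nat.zero_le m).trans_lt hmn
  have ht : (0 : ℝ) < n - m := sub_pos.2 (by exact_mod_cast hmn)
  have hdecay := div_rpow_le hA ((n : ℝ) - m)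
  rw [neg_sub] at hdecay
  rw [← Real.rpow_natCast, Nat.cast_sub hmn.le]
  calc ε / (n * A ^ ((n : ℝ) - m)) = ε / (n * (n - m)) * ((n - m) / A ^ ((n : ℝ) - m)) := by
        field_simp
    _ ≤ ε / (n * (n - m)) * (2 / Real.log A * A ^ (((m : ℝ) - n) / 2)) := by gcongr
    _ = _ := by ring

theorem intervalIntegral_ite_mul_ite_le {f g : ℝ → ℝ} (hf : Measurable f) (hg : Measurable g)
    {a b δ : ℝ} (hab : a ≤ b) :
    ∫ x in a..b, (if |f x - round (f x)| ≤ δ then (1 : ℝ) else 0) *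
        (if |g x - round (g x)| ≤ δ then (1 : ℝ) else 0) ≤
      volume.real (Icc a b ∩ f ⁻¹' nearInt δ ∩ g ⁻¹' nearInt δ) := by
  have hW : MeasurableSet (f ⁻¹' nearInt δ ∩ g ⁻¹' nearInt δ) :=
    (hf (measurableSet_nearInt δ)).inter (hg (measurableSet_nearInt δ))
  have hfun : (fun x => (if |f x - round (f x)| ≤ δ then (1 : ℝ) else 0) *
      (if |g x - round (g x)| ≤ δ then (1 : ℝ) else 0)) =
      (f ⁻¹' nearInt δ ∩ g ⁻¹' nearInt δ).indicator 1 := by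
    ext x
    simp only [indicator, mem_inter_iff, mem_preimage, mem_nearInt_iff_abs_sub_round_le,
      Pi.one_apply, ite_zero_mul_ite_zero, one_mul]
  rw [intervalIntegral.integral_of_le hab, hfun, integral_indicator_one hW,
    measureReal_restrict_apply hW]
  exact measureReal_mono (fun x ⟨⟨hxf, hxg⟩, hx⟩ => ⟨⟨Ioc_subset_Icc_self hx, hxf⟩, hxg⟩)
    ((measure_mono (inter_subset_left.trans inter_subset_left)).trans_lt measure_Icc_lt_top).ne

/-- Lemma 2.7 (Integral bound 2): for fixed `A > 1` and `s > 0`, there exist `C > 0`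
and `N₀` such that for all integers `n > m₁ > m₂ ≥ 1` with `m₁ ≥ N₀` and all `N ≥ 1`,
`∫_A^{A+1} χ(x^n - x^{m₁}) χ(x^n - x^{m₂}) dx
  ≤ C (1/N² + m₁ A^{(m₁-n)/2} / (N n (n-m₁)))`,
where `χ` is the indicator of `ℤ + [-2s/N, 2s/N]`. -/
theorem integral_double_indicator_bound (A s : ℝ) (hA : 1 < A) (hs : 0 < s) :
    ∃ C : ℝ, 0 < C ∧ ∃ N₀ : ℕ, ∀ n m₁ m₂ N : ℕ,
      0 < m₂ → m₂ < m₁ → m₁ < n → N₀ ≤ m₁ → 0 < N →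
      (∫ x in A..(A + 1),
          (if |x ^ n - x ^ m₁ - round (x ^ n - x ^ m₁)| ≤ 2 * s / N then (1 : ℝ) else 0) *
          (if |x ^ n - x ^ m₂ - round (x ^ n - x ^ m₂)| ≤ 2 * s / N then (1 : ℝ) else 0))
        ≤ C * (1 / N ^ 2 +
            m₁ * A ^ (((m₁ : ℝ) - n) / 2) / (N * n * ((n : ℝ) - m₁))) := by
  have hlog : 0 < Real.log A := Real.log_pos hA
  have hc : 0 < 1 - A⁻¹ := sub_pos.2 (inv_lt_one_of_one_lt₀ hA)
  set K := 180 / (1 - A⁻¹) ^ 2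
  refine ⟨K * (4 * s ^ 2 + 4 * s / Real.log A), by positivity, 0, ?_⟩
  intro n m₁ m₂ N _ h21 h1n _ hN
  have hN : (0 : ℝ) < N := by exact_mod_cast hN
  refine (intervalIntegral_ite_mul_ite_le (by fun_prop) (by fun_prop) (by linarith)).trans
    ((ENNReal.toReal_le_of_le_ofReal (by positivity) (volume_Icc_pow_sub_pow_mem_nearInt_inter_le
      hA h21 h1n (by positivity))).trans ?_)
  set Y := m₁ * A ^ (((m₁ : ℝ) - n) / 2) / (N * n * ((n : ℝ) - m₁))
  have hY : 0 ≤ Y := by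
    have := sub_pos.2 (Nat.cast_lt (α := ℝ).2 h1n)
    have := Real.rpow_nonneg (by linarith : 0 ≤ A) (((m₁ : ℝ) - n) / 2)
    positivity
  calc K * ((2 * s / N) ^ 2 + m₁ * (2 * s / N) / (n * A ^ (n - m₁)))
      ≤ K * ((2 * s / N) ^ 2 + 2 / Real.log A *
          (m₁ * (2 * s / N) * A ^ (((m₁ : ℝ) - n) / 2) / (n * ((n : ℝ) - m₁)))) := by
        gcongr
        exact div_mul_pow_sub_le hA (by positivity) h1n
    _ = K * (4 * s ^ 2 * (1 / N ^ 2) + 4 * s / Real.log A * Y) := by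
        simp only [Y]; field_simp; ring
    _ ≤ K * (4 * s ^ 2 + 4 * s / Real.log A) * (1 / N ^ 2 + Y) := by
        have : 0 ≤ K * (4 * s ^ 2 * Y + 4 * s / Real.log A * (1 / N ^ 2)) := by positivity
        nlinarith
end
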